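/- arXiv:2012.08718 — 2 statements merged into one kernel-verified Lean document; each statement's English description precedes it below -/
import Mathlib

section
/- Strict monotonicity of the passive–active gap in the subsidy: for all integers τ ≥ 1, b ≥ 0 and all reals δ₁ ≤ δ₂, one has g_{δ₂}(τ,b) − g_{δ₁}(τ,b) ≥ (1 − β)·(δ₂ − δ₁); in particular, since 0 < β < 1, the map δ ↦ g_δ(τ,b) is strictly increasing. -/
noncomputable def F (α : ℝ) (x : ℕ) : ℝ := α * (x : ℝ) ^ 2

noncomputable def V (k : ℕ) (E α β δ : ℝ) : ℕ → ℕ → ℝ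
  | 0, _ => 0
  | 1, 0 => max δ 0
  | 1, b + 1 => max (δ - F α b) (E - F α (b + 1 - k))
  | t + 2, b =>
      max (δ + β * V k E α β δ (t + 1) (b - 1))
        ((if 1 ≤ b then E else 0) + β * V k E α β δ (t + 1) (b - k))

noncomputable def g (k : ℕ) (E α β δ : ℝ) : ℕ → ℕ → ℝ
  | 0, _ => 0
  | 1, 0 => δ
  | 1, b + 1 => δ - F α b - E + F α (b + 1 - k)
  | t + 2, b =>
      δ + β * V k E α β δ (t + 1) (b - 1) - (if 1 ≤ b then E else 0)
        - β * V k E α β δ (t + 1) (b - k)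

noncomputable def whittle (k : ℕ) (E α β : ℝ) (τ b : ℕ) : ℝ :=
  sInf {δ : ℝ | 0 ≤ g k E α β δ τ b}

/-!
Write `D t b = V_{δ₂}(t, b) - V_{δ₁}(t, b)` and `Δ = δ₂ - δ₁ ≥ 0`. Unfolding the definition,
`g_{δ₂}(t + 1, b) - g_{δ₁}(t + 1, b) = Δ - β (D t (b - k) - D t (b - 1))`, so it suffices to show
`D t (b - k) - D t (b - 1) ≤ Δ` for every `b`. At horizon 1 this holds because `0 ≤ D 1 ≤ Δ`. Going
from horizon `t + 1` to `t + 2`, the increment of a maximum lies between the minimum and the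
maximum of the increments of its branches, which are `Δ + β D (b - 1)` (passive) and `β D (b - k)`
(active). Since `(b - k) - 1 = (b - 1) - k`, each of the four combinations of branches is bounded
by `Δ` using the inductive hypothesis at `b - 1` and `b - k` together with `0 ≤ β ≤ 1`.
-/

theorem min_sub_le_max_sub_max {α : Type*} [AddCommGroup α] [LinearOrder α]
    [IsOrderedAddMonoid α] (a b c d : α) : min (a - c) (b - d) ≤ max a b - max c d := by
  have h := max_sub_max_le_max c d a b
  rw [← neg_sub a c, ← neg_sub b d, max_neg_neg, sub_le_comm, sub_neg_eq_add] at h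
  exact le_sub_iff_add_le'.2 h

section

variable {k : ℕ} {E α β δ₁ δ₂ : ℝ}

theorem V_one_eq (δ : ℝ) (b : ℕ) :
    V k E α β δ 1 b = max (δ - F α (b - 1)) ((if 1 ≤ b then E else 0) - F α (b - k)) := by
  cases b <;> simp [V, F]

theorem V_succ_succ (δ : ℝ) (t b : ℕ) :
    V k E α β δ (t + 2) b = max (δ + β * V k E α β δ (t + 1) (b - 1))
      ((if 1 ≤ b then E else 0) + β * V k E α β δ (t + 1) (b - k)) := rfl

theorem V_one_sub_mem_Icc (hδ : δ₁ ≤ δ₂) (b : ℕ) :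
    V k E α β δ₂ 1 b - V k E α β δ₁ 1 b ∈ Set.Icc 0 (δ₂ - δ₁) := by
  rw [V_one_eq, V_one_eq]
  constructor
  · exact sub_nonneg.2 (max_le_max (by linarith) le_rfl)
  · exact (max_sub_max_le_max _ _ _ _).trans (max_le (by linarith) (by simpa using hδ))

theorem V_succ_succ_sub_le (t b : ℕ) :
    V k E α β δ₂ (t + 2) b - V k E α β δ₁ (t + 2) b ≤
      max (δ₂ - δ₁ + β * (V k E α β δ₂ (t + 1) (b - 1) - V k E α β δ₁ (t + 1) (b - 1)))
        (β * (V k E α β δ₂ (t + 1) (b - k) - V k E α β δ₁ (t + 1) (b - k))) := by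
  rw [V_succ_succ, V_succ_succ]
  refine (max_sub_max_le_max _ _ _ _).trans_eq ?_
  congr 1 <;> ring

theorem le_V_succ_succ_sub (t b : ℕ) :
    min (δ₂ - δ₁ + β * (V k E α β δ₂ (t + 1) (b - 1) - V k E α β δ₁ (t + 1) (b - 1)))
        (β * (V k E α β δ₂ (t + 1) (b - k) - V k E α β δ₁ (t + 1) (b - k))) ≤
      V k E α β δ₂ (t + 2) b - V k E α β δ₁ (t + 2) b := by
  rw [V_succ_succ, V_succ_succ]
  refine Eq.trans_le ?_ (min_sub_le_max_sub_max _ _ _ _)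
  congr 1 <;> ring

theorem shift_sub_le_of_between_branches {k : ℕ} {β Δ : ℝ} (hβ0 : 0 ≤ β) (hβ1 : β ≤ 1)
    (hΔ : 0 ≤ Δ) {D D' : ℕ → ℝ} (hD : ∀ b, D (b - k) - D (b - 1) ≤ Δ)
    (hlow : ∀ b, min (Δ + β * D (b - 1)) (β * D (b - k)) ≤ D' b)
    (hup : ∀ b, D' b ≤ max (Δ + β * D (b - 1)) (β * D (b - k))) (b : ℕ) :
    D' (b - k) - D' (b - 1) ≤ Δ := by
  have hup_b := hup (b - k)
  have hlow_b := hlow (b - 1)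
  have hD_k := mul_le_mul_of_nonneg_left (hD (b - k)) hβ0
  have hD_1 := mul_le_mul_of_nonneg_left (hD (b - 1)) hβ0
  have hβΔ : β * Δ ≤ Δ := mul_le_of_le_one_left hΔ hβ1
  rw [Nat.sub_right_comm b k 1] at hup_b hD_k
  rcases max_cases (Δ + β * D (b - 1 - k)) (β * D (b - k - k)) with ⟨hmax, -⟩ | ⟨hmax, -⟩ <;>
  rcases min_cases (Δ + β * D (b - 1 - 1)) (β * D (b - 1 - k)) with ⟨hmin, -⟩ | ⟨hmin, -⟩ <;>
  rw [hmax] at hup_b <;> rw [hmin] at hlow_b <;> linarith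

theorem V_sub_V_shift_le (hβ0 : 0 ≤ β) (hβ1 : β ≤ 1) (hδ : δ₁ ≤ δ₂) (t b : ℕ) :
    (V k E α β δ₂ (t + 1) (b - k) - V k E α β δ₁ (t + 1) (b - k)) -
      (V k E α β δ₂ (t + 1) (b - 1) - V k E α β δ₁ (t + 1) (b - 1)) ≤ δ₂ - δ₁ := by
  induction t generalizing b with
  | zero =>
    have hk := V_one_sub_mem_Icc (k := k) (E := E) (α := α) (β := β) hδ (b - k)
    have h1 := V_one_sub_mem_Icc (k := k) (E := E) (α := α) (β := β) hδ (b - 1)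
    linarith [hk.2, h1.1]
  | succ t ih =>
    exact shift_sub_le_of_between_branches hβ0 hβ1 (sub_nonneg.2 hδ)
      (D := fun b => V k E α β δ₂ (t + 1) b - V k E α β δ₁ (t + 1) b)
      (D' := fun b => V k E α β δ₂ (t + 2) b - V k E α β δ₁ (t + 2) b)
      ih (le_V_succ_succ_sub t) (V_succ_succ_sub_le t) b

theorem g_one_sub (b : ℕ) : g k E α β δ₂ 1 b - g k E α β δ₁ 1 b = δ₂ - δ₁ := by
  cases b with
  | zero => rfl
  | succ b => simp only [g]; ring

theorem g_succ_succ_sub (t b : ℕ) :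
    g k E α β δ₂ (t + 2) b - g k E α β δ₁ (t + 2) b = δ₂ - δ₁ - β *
      ((V k E α β δ₂ (t + 1) (b - k) - V k E α β δ₁ (t + 1) (b - k)) -
        (V k E α β δ₂ (t + 1) (b - 1) - V k E α β δ₁ (t + 1) (b - 1))) := by
  simp only [g]
  ring

theorem one_sub_mul_le_g_sub (hβ0 : 0 ≤ β) (hβ1 : β ≤ 1) (hδ : δ₁ ≤ δ₂) (t b : ℕ) :
    (1 - β) * (δ₂ - δ₁) ≤ g k E α β δ₂ (t + 1) b - g k E α β δ₁ (t + 1) b := by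
  cases t with
  | zero =>
    rw [g_one_sub]
    exact mul_le_of_le_one_left (sub_nonneg.2 hδ) (by linarith)
  | succ t =>
    rw [g_succ_succ_sub]
    have hshift := V_sub_V_shift_le (k := k) (E := E) (α := α) hβ0 hβ1 hδ t b
    linarith [mul_le_mul_of_nonneg_left hshift hβ0]

end

theorem gap_strict_monotone_general (k : ℕ) (E α β : ℝ)
    (hβ0 : 0 < β) (hβ1 : β < 1)
    (τ b : ℕ) (hτ : 1 ≤ τ) :
    (∀ δ₁ δ₂ : ℝ, δ₁ ≤ δ₂ →
      g k E α β δ₂ τ b - g k E α β δ₁ τ b ≥ (1 - β) * (δ₂ - δ₁)) ∧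
    StrictMono (fun δ : ℝ => g k E α β δ τ b) := by
  obtain ⟨t, rfl⟩ : ∃ t, τ = t + 1 := ⟨τ - 1, by omega⟩
  have gap_ge (δ₁ δ₂ : ℝ) (hδ : δ₁ ≤ δ₂) :=
    one_sub_mul_le_g_sub (k := k) (E := E) (α := α) hβ0.le hβ1.le hδ t b
  refine ⟨gap_ge, fun δ₁ δ₂ hδ => ?_⟩
  have hpos : 0 < (1 - β) * (δ₂ - δ₁) := mul_pos (by linarith) (by linarith)
  linarith [gap_ge δ₁ δ₂ hδ.le]

theorem gap_strict_monotone (k : ℕ) (hk : 1 ≤ k) (E α β : ℝ) (hE : 0 ≤ E) (hα : 0 < α)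
    (hβ0 : 0 < β) (hβ1 : β < 1)
    (τ b : ℕ) (hτ : 1 ≤ τ) :
    (∀ δ₁ δ₂ : ℝ, δ₁ ≤ δ₂ →
      g k E α β δ₂ τ b - g k E α β δ₁ τ b ≥ (1 - β) * (δ₂ - δ₁)) ∧
    StrictMono (fun δ : ℝ => g k E α β δ τ b) :=
  gap_strict_monotone_general k E α β hβ0 hβ1 τ b hτ
end

section
/- Lower bound on the Whittle index of busy states: for every integer τ ≥ 1 and every integer b ≥ 1, the Whittle index satisfies ω(τ,b) ≥ E; equivalently, for every subsidy δ < E the active (offloading) action is strictly optimal at every state with at least one remaining subtask. -/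
/-!
For a subsidy `δ ≤ E` the value function grows by at most `E - δ` when the backlog grows by at
most `k`, since one active slot in place of a passive one absorbs the extra subtasks. At a busy
state the active action leaves a backlog at most `k` below the passive one, so for `δ < E`
passive loses by at least `(1 - β) (E - δ) > 0`; hence the index set lies above `E`. It is
nonempty: the value gains at most `F b` when the backlog drops below `b` (the penalty is
monotone), so the subsidy `E + F (b - 1)` makes passive weakly optimal at `(τ, b)`.
-/

section
variable {k : ℕ} {E α β δ : ℝ}

lemma F_nonneg (hα : 0 ≤ α) (x : ℕ) : 0 ≤ F α x := by
  unfold F; positivity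

lemma F_mono (hα : 0 ≤ α) : Monotone (F α) := fun a b hab => by
  unfold F; gcongr

lemma V_zero (b : ℕ) : V k E α β δ 0 b = 0 := rfl

lemma V_one_zero : V k E α β δ 1 0 = max δ 0 := rfl

lemma V_one_succ (b : ℕ) :
    V k E α β δ 1 (b + 1) = max (δ - F α b) (E - F α (b + 1 - k)) := rfl

lemma V_add_two_zero (t : ℕ) :
    V k E α β δ (t + 2) 0 = max (δ + β * V k E α β δ (t + 1) 0) (β * V k E α β δ (t + 1) 0) := by
  simp [V]

lemma V_add_two_succ (t b : ℕ) :
    V k E α β δ (t + 2) (b + 1) =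
      max (δ + β * V k E α β δ (t + 1) b) (E + β * V k E α β δ (t + 1) (b + 1 - k)) := by
  simp [V]

lemma g_one_succ (b : ℕ) : g k E α β δ 1 (b + 1) = δ - F α b - E + F α (b + 1 - k) := rfl

lemma g_add_two_succ (t b : ℕ) :
    g k E α β δ (t + 2) (b + 1) =
      δ + β * V k E α β δ (t + 1) b - E - β * V k E α β δ (t + 1) (b + 1 - k) := by
  simp [g]

lemma mul_le_mul_add_of_le_add {x y r : ℝ} (hβ0 : 0 ≤ β) (hβ1 : β ≤ 1) (hr : 0 ≤ r)
    (h : x ≤ y + r) : β * x ≤ β * y + r := by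
  nlinarith

theorem V_le_add_sub_of_le_of_le_add (hα : 0 ≤ α) (hβ0 : 0 ≤ β) (hβ1 : β ≤ 1) (hδ : δ ≤ E) :
    ∀ {τ b c : ℕ}, c ≤ b → b ≤ c + k → V k E α β δ τ b ≤ V k E α β δ τ c + (E - δ)
  | 0, _, _, _, _ => by simp only [V_zero]; linarith
  | _, 0, _, hcb, _ => by obtain rfl := Nat.le_zero.mp hcb; linarith
  | 1, b + 1, 0, _, _ => by
    rw [V_one_succ, V_one_zero]
    exact max_le (by linarith [le_max_left δ 0, F_nonneg hα b])
      (by linarith [le_max_left δ 0, F_nonneg hα (b + 1 - k)])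
  | 1, b + 1, c + 1, hcb, hbk => by
    rw [V_one_succ, V_one_succ, ← max_add_add_right]
    refine max_le_max (by linarith [F_mono hα (show c ≤ b by omega)]) ?_
    linarith [F_mono hα (show c + 1 - k ≤ b + 1 - k by omega)]
  | t + 2, b + 1, 0, _, hbk => by
    -- active at `b + 1 ≤ k` clears the backlog: it is passive at `0` plus `E - δ`
    rw [V_add_two_succ, V_add_two_zero, Nat.sub_eq_zero_of_le (by omega), ← max_add_add_right]
    refine max_le (le_max_of_le_left ?_) (le_max_of_le_left (by linarith))
    linarith [mul_le_mul_add_of_le_add hβ0 hβ1 (by linarith)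
      (V_le_add_sub_of_le_of_le_add hα hβ0 hβ1 hδ (τ := t + 1) (Nat.zero_le b) (by omega))]
  | t + 2, b + 1, c + 1, hcb, hbk => by
    rw [V_add_two_succ, V_add_two_succ, ← max_add_add_right]
    have hr : 0 ≤ E - δ := by linarith
    refine max_le_max ?_ ?_
    · linarith [mul_le_mul_add_of_le_add hβ0 hβ1 hr
        (V_le_add_sub_of_le_of_le_add hα hβ0 hβ1 hδ (τ := t + 1) (b := b) (c := c)
          (by omega) (by omega))]
    · linarith [mul_le_mul_add_of_le_add hβ0 hβ1 hr
        (V_le_add_sub_of_le_of_le_add hα hβ0 hβ1 hδ (τ := t + 1) (b := b + 1 - k)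
          (c := c + 1 - k) (by omega) (by omega))]

lemma V_one_le_max (hE : 0 ≤ E) (hα : 0 ≤ α) (c : ℕ) : V k E α β δ 1 c ≤ max δ E := by
  cases c with
  | zero => exact max_le_max le_rfl hE
  | succ c =>
    rw [V_one_succ]
    exact max_le_max (by linarith [F_nonneg hα c]) (by linarith [F_nonneg hα (c + 1 - k)])

lemma max_le_V_one_succ_add (hα : 0 ≤ α) (b : ℕ) :
    max δ E ≤ V k E α β δ 1 (b + 1) + F α (b + 1) := by
  rw [V_one_succ, ← max_add_add_right]
  exact max_le_max (by linarith [F_mono hα (Nat.le_succ b)])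
    (by linarith [F_mono hα (show b + 1 - k ≤ b + 1 by omega)])

theorem V_le_add_F_of_le (hE : 0 ≤ E) (hα : 0 ≤ α) (hβ0 : 0 ≤ β) (hβ1 : β ≤ 1) :
    ∀ {τ b c : ℕ}, c ≤ b → V k E α β δ τ c ≤ V k E α β δ τ b + F α b
  | 0, b, _, _ => by simp only [V_zero]; linarith [F_nonneg hα b]
  | _, 0, _, hcb => by obtain rfl := Nat.le_zero.mp hcb; linarith [F_nonneg hα 0]
  | 1, b + 1, _, _ => (V_one_le_max hE hα _).trans (max_le_V_one_succ_add hα b)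
  | t + 2, b + 1, c, hcb => by
    have hFb := F_mono hα (Nat.le_succ b)
    have hFbk := F_mono hα (show b + 1 - k ≤ b + 1 by omega)
    have passive := mul_le_mul_add_of_le_add hβ0 hβ1 (F_nonneg hα b)
      (V_le_add_F_of_le hE hα hβ0 hβ1 (τ := t + 1) (show c - 1 ≤ b by omega))
    have active := mul_le_mul_add_of_le_add hβ0 hβ1 (F_nonneg hα _)
      (V_le_add_F_of_le hE hα hβ0 hβ1 (τ := t + 1) (show c - k ≤ b + 1 - k by omega))
    have hind : (if 1 ≤ c then E else 0) ≤ E := by split_ifs <;> linarith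
    rw [V_add_two_succ, ← max_add_add_right]
    exact max_le_max (by linarith) (by linarith)

lemma g_succ_succ_neg_of_lt (hk : 1 ≤ k) (hα : 0 ≤ α) (hβ0 : 0 ≤ β) (hβ1 : β < 1)
    (hδ : δ < E) (t n : ℕ) : g k E α β δ (t + 1) (n + 1) < 0 := by
  cases t with
  | zero =>
    rw [g_one_succ]
    linarith [F_mono hα (show n + 1 - k ≤ n by omega)]
  | succ t =>
    rw [g_add_two_succ]
    have hgap := V_le_add_sub_of_le_of_le_add hα hβ0 hβ1.le hδ.le (τ := t + 1) (k := k)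
      (show n + 1 - k ≤ n by omega) (by omega)
    have hdiscount : β * (E - δ) < E - δ := mul_lt_of_lt_one_left (by linarith) hβ1
    linarith [mul_le_mul_of_nonneg_left hgap hβ0]

lemma g_succ_succ_E_add_F_nonneg (hk : 1 ≤ k) (hE : 0 ≤ E) (hα : 0 ≤ α) (hβ0 : 0 ≤ β)
    (hβ1 : β ≤ 1) (t n : ℕ) : 0 ≤ g k E α β (E + F α n) (t + 1) (n + 1) := by
  cases t with
  | zero =>
    rw [g_one_succ]
    linarith [F_nonneg hα (n + 1 - k)]
  | succ t =>
    rw [g_add_two_succ]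
    linarith [mul_le_mul_add_of_le_add hβ0 hβ1 (F_nonneg hα n)
      (V_le_add_F_of_le hE hα hβ0 hβ1 (τ := t + 1) (δ := E + F α n) (k := k)
        (show n + 1 - k ≤ n by omega))]

end

theorem whittle_busy_lower_bound (k : ℕ) (hk : 1 ≤ k) (E α β : ℝ) (hE : 0 ≤ E) (hα : 0 < α)
    (hβ0 : 0 < β) (hβ1 : β < 1)
    (τ b : ℕ) (hτ : 1 ≤ τ) (hb : 1 ≤ b) :
    E ≤ whittle k E α β τ b ∧
    ∀ δ : ℝ, δ < E → g k E α β δ τ b < 0 := by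
  obtain ⟨t, rfl⟩ : ∃ t, τ = t + 1 := ⟨τ - 1, by omega⟩
  obtain ⟨n, rfl⟩ : ∃ n, b = n + 1 := ⟨b - 1, by omega⟩
  have hneg : ∀ δ : ℝ, δ < E → g k E α β δ (t + 1) (n + 1) < 0 := fun δ hδ =>
    g_succ_succ_neg_of_lt hk hα.le hβ0.le hβ1 hδ t n
  refine ⟨le_csInf ⟨E + F α n, ?_⟩ fun δ hδ => ?_, hneg⟩
  · exact g_succ_succ_E_add_F_nonneg hk hE hα.le hβ0.le hβ1.le t n
  · exact not_lt.mp fun hlt => (hneg δ hlt).not_ge hδ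
end
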